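/- arXiv:2309.12372 — 3 statements merged into one kernel-verified Lean document; each statement's English description precedes it below -/
import Mathlib

section
/- Let M be the Puiseux monoid M = ⟨1/p : p prime, p ≥ 3⟩ ∪ ℚ_{≥1}. Then M is not almost atomic; in particular, 3/2 cannot be written as a difference of two atomic elements of M. -/
/-- `a` is an atom of the set `S` (a Puiseux monoid, hence reduced). -/
def IsAtomOfSet (S : Set ℚ) (a : ℚ) : Prop :=
  a ∈ S ∧ a ≠ 0 ∧ ∀ x ∈ S, ∀ y ∈ S, a = x + y → x = 0 ∨ y = 0

/-- `b` is atomic in `S`: it is `0` or a sum of atoms of `S`. -/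
def AtomicOfSet (S : Set ℚ) (b : ℚ) : Prop :=
  b ∈ AddSubmonoid.closure {a | IsAtomOfSet S a}

/-- The Puiseux monoid `⟨1/p : p prime, p ≥ 3⟩ ∪ ℚ_{≥1}`. -/
def S16 : Set ℚ :=
  (AddSubmonoid.closure {q : ℚ | ∃ p : ℕ, p.Prime ∧ 3 ≤ p ∧ q = 1/(p : ℚ)} : Set ℚ)
    ∪ {x : ℚ | 1 ≤ x}

/-!
Every rational `a ≥ 1` splits in `S16` as `1/p + (a - 1/p)` for a suitable odd prime `p`
(or as `1/3 + 2/3` when `a = 1`), so it is not an atom. Hence all atoms, and therefore all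
atomic elements, lie in the generated part `⟨1/p : p odd prime⟩`, whose elements have odd
denominators. Rationals with odd denominator form an additive group, so a difference of
atomic elements never equals `3/2`; taking `b = 3/2` shows that `S16` is not almost atomic.
-/

def Rat.oddDenSubgroup : AddSubgroup ℚ where
  carrier := {q | Odd q.den}
  zero_mem' := by simp
  add_mem' {q r} hq hr := (hq.mul hr).of_dvd_nat (Rat.add_den_dvd q r)
  neg_mem' {q} hq := by simpa [Rat.neg_den] using hq

namespace S16

lemma one_div_prime_mem_closure {p : ℕ} (hp : p.Prime) (hp3 : 3 ≤ p) :
    1 / (p : ℚ) ∈ AddSubmonoid.closure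
      {q : ℚ | ∃ p : ℕ, p.Prime ∧ 3 ≤ p ∧ q = 1/(p : ℚ)} :=
  AddSubmonoid.subset_closure ⟨p, hp, hp3, rfl⟩

lemma closure_le_oddDen :
    AddSubmonoid.closure {q : ℚ | ∃ p : ℕ, p.Prime ∧ 3 ≤ p ∧ q = 1/(p : ℚ)} ≤
      Rat.oddDenSubgroup.toAddSubmonoid := by
  rw [AddSubmonoid.closure_le]
  rintro _ ⟨p, hp, hp3, rfl⟩
  change Odd (1 / (p : ℚ)).den
  rw [one_div, Rat.inv_natCast_den_of_pos hp.pos]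
  exact hp.odd_of_ne_two (by omega)

lemma exists_prime_one_le_sub {a : ℚ} (ha : 1 < a) :
    ∃ p : ℕ, p.Prime ∧ 3 ≤ p ∧ 1 ≤ a - 1 / p := by
  obtain ⟨n, hn⟩ := exists_nat_one_div_lt (sub_pos.mpr ha)
  obtain ⟨p, hnp, hp⟩ := Nat.exists_infinite_primes (max 3 (n + 1))
  refine ⟨p, hp, le_of_max_le_left hnp, ?_⟩
  have hle : 1 / (p : ℚ) ≤ 1 / (n + 1) :=
    one_div_le_one_div_of_le (by positivity) (by exact_mod_cast le_of_max_le_right hnp)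
  linarith

lemma not_isAtomOfSet_of_one_le {a : ℚ} (ha : 1 ≤ a) : ¬ IsAtomOfSet S16 a := by
  rintro ⟨-, -, hsplit⟩
  rcases ha.eq_or_lt with rfl | ha
  · have hthird := one_div_prime_mem_closure Nat.prime_three le_rfl
    have htwo_thirds : (2 / 3 : ℚ) ∈ S16 := by
      left
      convert add_mem hthird hthird using 1
      norm_num
    rcases hsplit _ (Or.inl hthird) _ htwo_thirds (by norm_num) with h | h <;> norm_num at h
  · obtain ⟨p, hp, hp3, hle⟩ := exists_prime_one_le_sub ha
    have hpos : (0 : ℚ) < 1 / p := by have := hp.pos; positivity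
    rcases hsplit _ (Or.inl (one_div_prime_mem_closure hp hp3)) (a - 1 / p) (Or.inr hle)
      (by ring) with h | h <;> linarith

lemma mem_oddDen_of_atomicOfSet {b : ℚ} (hb : AtomicOfSet S16 b) :
    b ∈ Rat.oddDenSubgroup := by
  refine (AddSubmonoid.closure_le.mpr ?_ : _ ≤ Rat.oddDenSubgroup.toAddSubmonoid) hb
  intro a ha
  rcases ha.1 with haS | haS
  · exact closure_le_oddDen haS
  · exact absurd ha (not_isAtomOfSet_of_one_le haS)

lemma three_halves_ne_sub_of_atomicOfSet {u v : ℚ} (hu : AtomicOfSet S16 u)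
    (hv : AtomicOfSet S16 v) : (3 / 2 : ℚ) ≠ u - v := by
  intro h
  have hodd : Odd (3 / 2 : ℚ).den :=
    h ▸ Rat.oddDenSubgroup.sub_mem (mem_oddDen_of_atomicOfSet hu) (mem_oddDen_of_atomicOfSet hv)
  norm_num at hodd

end S16

/-- `S16` is not almost atomic; in particular `3/2` is not a difference of two
atomic elements. -/
theorem stmt_17 :
    ¬ (∀ b ∈ S16, ∃ c, AtomicOfSet S16 c ∧ AtomicOfSet S16 (b + c)) ∧
    ¬ ∃ u v : ℚ, AtomicOfSet S16 u ∧ AtomicOfSet S16 v ∧ (3/2 : ℚ) = u - v := by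
  have not_diff : ¬ ∃ u v : ℚ, AtomicOfSet S16 u ∧ AtomicOfSet S16 v ∧ (3/2 : ℚ) = u - v :=
    fun ⟨u, v, hu, hv, h⟩ => S16.three_halves_ne_sub_of_atomicOfSet hu hv h
  refine ⟨fun hAlmost => ?_, not_diff⟩
  obtain ⟨c, hc, hbc⟩ := hAlmost (3 / 2) (Or.inr (by norm_num))
  exact not_diff ⟨3 / 2 + c, c, hbc, hc, by ring⟩
end

section
/- Every nearly atomic cancellative commutative monoid is almost atomic. -/
/-- `a` is an atom of the cancellative commutative monoid `M`. -/
def IsAtomG {M : Type*} [AddCancelCommMonoid M] (a : M) : Prop :=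
  ¬ IsAddUnit a ∧ ∀ x y : M, a = x + y → IsAddUnit x ∨ IsAddUnit y

/-- `b` is atomic: invertible or a sum of atoms. -/
def AtomicG {M : Type*} [AddCancelCommMonoid M] (b : M) : Prop :=
  IsAddUnit b ∨ b ∈ AddSubmonoid.closure {a : M | IsAtomG a}

/-- Every nearly atomic cancellative commutative monoid is almost atomic. -/
theorem stmt_18 {M : Type*} [AddCancelCommMonoid M]
    (hna : ∃ c : M, ∀ b : M, ¬ IsAddUnit b → AtomicG (b + c)) :
    ∀ b : M, ∃ c : M, AtomicG c ∧ AtomicG (b + c) := by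
  obtain ⟨c, hc⟩ := hna
  intro b
  by_cases hb : IsAddUnit b
  · exact ⟨0, Or.inl isAddUnit_zero, by rw [add_zero]; exact Or.inl hb⟩
  · refine ⟨c + c, ?_, ?_⟩
    · by_cases hcu : IsAddUnit c
      · exact Or.inl (hcu.add hcu)
      · exact hc c hcu
    · have hbc : ¬ IsAddUnit (b + c) := fun h => hb (isAddUnit_of_add_isAddUnit_left h)
      have := hc (b + c) hbc
      rwa [add_assoc] at this
end

section
/- There exists a Puiseux monoid that is nearly atomic but not Furstenberg. -/
/-- `a` is an atom of the Puiseux monoid `M`. -/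
def IsAtomIn (M : AddSubmonoid ℚ) (a : ℚ) : Prop :=
  a ∈ M ∧ a ≠ 0 ∧ ∀ x ∈ M, ∀ y ∈ M, a = x + y → x = 0 ∨ y = 0

/-- `b` is atomic in `M`: it is `0` or a sum of atoms of `M`. -/
def AtomicIn (M : AddSubmonoid ℚ) (b : ℚ) : Prop :=
  b ∈ AddSubmonoid.closure {a | IsAtomIn M a}

/-- `x` divides `y` in `M`. -/
def DvdIn (M : AddSubmonoid ℚ) (x y : ℚ) : Prop := y - x ∈ M

def QuasiFurstenberg (M : AddSubmonoid ℚ) : Prop :=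
  ∀ b ∈ M, b ≠ 0 → ∃ c ∈ M, ∃ a, IsAtomIn M a ∧ DvdIn M a (b + c) ∧ ¬ DvdIn M a c

def QuasiAtomic (M : AddSubmonoid ℚ) : Prop :=
  ∀ b ∈ M, ∃ c ∈ M, AtomicIn M (b + c)

def AlmostFurstenberg (M : AddSubmonoid ℚ) : Prop :=
  ∀ b ∈ M, b ≠ 0 →
    ∃ c, AtomicIn M c ∧ ∃ a, IsAtomIn M a ∧ DvdIn M a (b + c) ∧ ¬ DvdIn M a c

def NearlyFurstenberg (M : AddSubmonoid ℚ) : Prop :=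
  ∃ c ∈ M, ∀ b ∈ M, b ≠ 0 → ∃ a, IsAtomIn M a ∧ DvdIn M a (b + c) ∧ ¬ DvdIn M a c

def Furstenberg (M : AddSubmonoid ℚ) : Prop :=
  ∀ b ∈ M, b ≠ 0 → ∃ a, IsAtomIn M a ∧ DvdIn M a b

def Antimatter (M : AddSubmonoid ℚ) : Prop := ∀ a, ¬ IsAtomIn M a

def AtomicMonoid (M : AddSubmonoid ℚ) : Prop := ∀ b ∈ M, AtomicIn M b

def NearlyAtomic (M : AddSubmonoid ℚ) : Prop :=
  ∃ c ∈ M, ∀ b ∈ M, b ≠ 0 → AtomicIn M (b + c)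

def AlmostAtomic (M : AddSubmonoid ℚ) : Prop :=
  ∀ b ∈ M, ∃ c, AtomicIn M c ∧ AtomicIn M (b + c)


namespace Stmt19
set_option maxHeartbeats 1600000

def Dy (q : ℚ) : Prop := ∃ (a m : ℕ), q = (a : ℚ) / 2^m
def Tr (q : ℚ) : Prop := ∃ (a m : ℕ), q = (a : ℚ) / 3^m
def J (q : ℚ) : Prop := ∃ (a : ℤ) (m : ℕ), q = (a : ℚ) / 6^m

lemma Dy.nonneg {q : ℚ} (h : Dy q) : 0 ≤ q := by
  obtain ⟨a, m, rfl⟩ := h; positivity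

lemma Tr.nonneg {q : ℚ} (h : Tr q) : 0 ≤ q := by
  obtain ⟨a, m, rfl⟩ := h; positivity

lemma Dy.zero : Dy 0 := ⟨0, 0, by norm_num⟩
lemma Tr.zero : Tr 0 := ⟨0, 0, by norm_num⟩

lemma Dy.add {p q : ℚ} (hp : Dy p) (hq : Dy q) : Dy (p + q) := by
  obtain ⟨a, m, rfl⟩ := hp; obtain ⟨b, l, rfl⟩ := hq
  refine ⟨a * 2^l + b * 2^m, m + l, ?_⟩
  push_cast
  rw [pow_add]
  field_simp
  try ring

lemma Tr.add {p q : ℚ} (hp : Tr p) (hq : Tr q) : Tr (p + q) := by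
  obtain ⟨a, m, rfl⟩ := hp; obtain ⟨b, l, rfl⟩ := hq
  refine ⟨a * 3^l + b * 3^m, m + l, ?_⟩
  push_cast
  rw [pow_add]
  field_simp
  try ring

lemma Dy.of_int {q : ℚ} (a : ℤ) (m : ℕ) (h : q = (a : ℚ) / 2^m) (h0 : 0 ≤ q) : Dy q := by
  have ha : 0 ≤ a := by
    by_contra hc
    push_neg at hc
    have h2 : (0:ℚ) < 2^m := by positivity
    have : (a : ℚ)/2^m < 0 := div_neg_of_neg_of_pos (by exact_mod_cast hc) h2
    rw [← h] at this; linarith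
  refine ⟨a.toNat, m, ?_⟩
  rw [h]
  congr 1
  exact_mod_cast (Int.toNat_of_nonneg ha).symm

lemma Tr.of_int {q : ℚ} (a : ℤ) (m : ℕ) (h : q = (a : ℚ) / 3^m) (h0 : 0 ≤ q) : Tr q := by
  have ha : 0 ≤ a := by
    by_contra hc
    push_neg at hc
    have h3 : (0:ℚ) < 3^m := by positivity
    have : (a : ℚ)/3^m < 0 := div_neg_of_neg_of_pos (by exact_mod_cast hc) h3
    rw [← h] at this; linarith
  refine ⟨a.toNat, m, ?_⟩
  rw [h]
  congr 1
  exact_mod_cast (Int.toNat_of_nonneg ha).symm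

lemma Dy.sub {p q : ℚ} (hp : Dy p) (hq : Dy q) (h : q ≤ p) : Dy (p - q) := by
  obtain ⟨a, m, hpe⟩ := hp; obtain ⟨b, l, hqe⟩ := hq
  refine Dy.of_int ((a:ℤ) * 2^l - (b:ℤ) * 2^m) (m + l) ?_ (by linarith)
  rw [hpe, hqe]
  push_cast
  rw [pow_add]
  field_simp
  try ring

lemma Tr.sub {p q : ℚ} (hp : Tr p) (hq : Tr q) (h : q ≤ p) : Tr (p - q) := by
  obtain ⟨a, m, hpe⟩ := hp; obtain ⟨b, l, hqe⟩ := hq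
  refine Tr.of_int ((a:ℤ) * 3^l - (b:ℤ) * 3^m) (m + l) ?_ (by linarith)
  rw [hpe, hqe]
  push_cast
  rw [pow_add]
  field_simp
  try ring

lemma Dy.half {q : ℚ} (h : Dy q) : Dy (q / 2) := by
  obtain ⟨a, m, rfl⟩ := h
  exact ⟨a, m + 1, by rw [pow_succ]; field_simp⟩

lemma Tr.third {q : ℚ} (h : Tr q) : Tr (q / 3) := by
  obtain ⟨a, m, rfl⟩ := h
  exact ⟨a, m + 1, by rw [pow_succ]; field_simp⟩

lemma J.of_Dy {q : ℚ} (h : Dy q) : J q := by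
  obtain ⟨a, m, rfl⟩ := h
  refine ⟨(a:ℤ) * 3^m, m, ?_⟩
  push_cast
  have h6 : (6:ℚ)^m = 2^m * 3^m := by rw [← mul_pow]; norm_num
  rw [h6]
  have h3 : (3:ℚ)^m ≠ 0 := by positivity
  field_simp
  try ring

lemma J.of_Tr {q : ℚ} (h : Tr q) : J q := by
  obtain ⟨a, m, rfl⟩ := h
  refine ⟨(a:ℤ) * 2^m, m, ?_⟩
  push_cast
  have h6 : (6:ℚ)^m = 2^m * 3^m := by rw [← mul_pow]; norm_num
  rw [h6]
  have h2 : (2:ℚ)^m ≠ 0 := by positivity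
  field_simp
  try ring

lemma J.add {p q : ℚ} (hp : J p) (hq : J q) : J (p + q) := by
  obtain ⟨a, m, rfl⟩ := hp; obtain ⟨b, l, rfl⟩ := hq
  refine ⟨a * 6^l + b * 6^m, m + l, ?_⟩
  push_cast
  rw [pow_add]
  field_simp
  try ring

lemma J.neg {p : ℚ} (hp : J p) : J (-p) := by
  obtain ⟨a, m, rfl⟩ := hp
  exact ⟨-a, m, by push_cast; ring⟩

lemma J.sub {p q : ℚ} (hp : J p) (hq : J q) : J (p - q) := by
  have := hp.add hq.neg; rwa [← sub_eq_add_neg] at this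

/-- dyadic ∧ triadic ⇒ a natural number -/
lemma nat_of_dy_tr {q : ℚ} (hd : Dy q) (ht : Tr q) : ∃ z : ℕ, q = z := by
  obtain ⟨a, m, rfl⟩ := hd
  obtain ⟨b, l, he⟩ := ht
  have hq : (a:ℚ) * 3^l = (b:ℚ) * 2^m := by
    rw [div_eq_div_iff (by positivity) (by positivity)] at he
    exact_mod_cast he
  have hn : a * 3^l = b * 2^m := by exact_mod_cast hq
  have hdvd : 2^m ∣ a * 3^l := ⟨b, by rw [hn]; ring⟩
  have hcop : Nat.Coprime (2^m) (3^l) := Nat.Coprime.pow _ _ (by norm_num : Nat.Coprime 2 3)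
  have hda : 2^m ∣ a := hcop.dvd_of_dvd_mul_right hdvd
  obtain ⟨z, rfl⟩ := hda
  refine ⟨z, ?_⟩
  have h2 : (2:ℚ)^m ≠ 0 := by positivity
  push_cast
  field_simp
  try ring

/-- the key reading lemma -/
lemma read {i j a : ℤ} {m : ℕ} (h : 8*(i:ℚ)/7 + (j:ℚ)/5 = (a:ℚ)/6^m) : 7 ∣ i ∧ 5 ∣ j := by
  have h7 : Prime (7:ℤ) := by norm_num
  have h5 : Prime (5:ℤ) := by norm_num
  have key : (40*i + 7*j) * 6^m = a * 35 := by
    have h6 : ((6:ℚ)^m) ≠ 0 := by positivity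
    have hL : 8*(i:ℚ)/7 + (j:ℚ)/5 = (40*(i:ℚ)+7*(j:ℚ))/35 := by ring
    rw [hL, div_eq_div_iff (by norm_num) h6] at h
    exact_mod_cast h
  constructor
  · have hd : (7:ℤ) ∣ (40*i + 7*j) * 6^m := ⟨a * 5, by linarith⟩
    rcases h7.dvd_mul.mp hd with hd1 | hd2
    · have : (7:ℤ) ∣ 40 * i := by
        have : (7:ℤ) ∣ 40 * i + 7*j - 7*j := dvd_sub hd1 ⟨j, by ring⟩
        simpa using this
      rcases h7.dvd_mul.mp this with h40 | hi
      · norm_num at h40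
      · exact hi
    · exfalso
      have := h7.dvd_of_dvd_pow hd2
      norm_num at this
  · have hd : (5:ℤ) ∣ (40*i + 7*j) * 6^m := ⟨a * 7, by linarith⟩
    rcases h5.dvd_mul.mp hd with hd1 | hd2
    · have : (5:ℤ) ∣ 7 * j := by
        have : (5:ℤ) ∣ 40 * i + 7*j - 40*i := dvd_sub hd1 ⟨8*i, by ring⟩
        simpa using this
      rcases h5.dvd_mul.mp this with h7' | hj
      · norm_num at h7'
      · exact hj
    · exfalso
      have := h5.dvd_of_dvd_pow hd2
      norm_num at this

lemma dy_dense {α β : ℚ} (h0 : 0 ≤ α) (h : α < β) : ∃ d, Dy d ∧ α < d ∧ d < β := by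
  obtain ⟨m, hm⟩ : ∃ m : ℕ, ((1:ℚ)/2)^m < β - α :=
    exists_pow_lt_of_lt_one (by linarith) (by norm_num)
  have h2 : (0:ℚ) < 2^m := by positivity
  have hm' : (1:ℚ)/2^m < β - α := by
    rwa [div_pow, one_pow] at hm
  refine ⟨((⌊α * 2^m⌋ + 1 : ℤ) : ℚ)/2^m, ?_, ?_, ?_⟩
  · apply Dy.of_int (⌊α * 2^m⌋ + 1) m rfl
    positivity
  · rw [lt_div_iff₀ h2]
    push_cast
    exact Int.lt_floor_add_one (α * 2^m)
  · rw [div_lt_iff₀ h2]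
    have hf : (⌊α * 2^m⌋ : ℚ) ≤ α * 2^m := Int.floor_le _
    have h1 : 1 < (β - α) * 2^m := by
      rw [div_lt_iff₀ h2] at hm'
      linarith
    push_cast
    nlinarith [hf, h1]

def Mem (q : ℚ) : Prop :=
  ∃ (n k : ℕ) (S V L H : ℚ),
    Tr S ∧ Dy V ∧ Dy L ∧ Tr H ∧
    4*(n:ℚ) ≤ 3*S ∧ 3*S ≤ 7*(n:ℚ) ∧
    V ≤ (k:ℚ) ∧ (0 < k → 0 < V) ∧
    H ≤ L ∧ (0 < L → 0 < H) ∧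
    q = 8*(n:ℚ)/7 + (k:ℚ)/5 + S + V + L + H

def M : AddSubmonoid ℚ where
  carrier := {q | Mem q}
  zero_mem' := by
    refine ⟨0, 0, 0, 0, 0, 0, Tr.zero, Dy.zero, Dy.zero, Tr.zero, ?_, ?_, ?_, ?_, ?_, ?_, ?_⟩
    all_goals norm_num
  add_mem' := by
    rintro x y ⟨n₁, k₁, S₁, V₁, L₁, H₁, hS₁, hV₁, hL₁, hH₁, hw₁, hw₁', hv₁, hv₁', hb₁, hb₁', he₁⟩
      ⟨n₂, k₂, S₂, V₂, L₂, H₂, hS₂, hV₂, hL₂, hH₂, hw₂, hw₂', hv₂, hv₂', hb₂, hb₂', he₂⟩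
    refine ⟨n₁ + n₂, k₁ + k₂, S₁ + S₂, V₁ + V₂, L₁ + L₂, H₁ + H₂,
      hS₁.add hS₂, hV₁.add hV₂, hL₁.add hL₂, hH₁.add hH₂, ?_, ?_, ?_, ?_, ?_, ?_, ?_⟩
    · push_cast; linarith
    · push_cast; linarith
    · push_cast; linarith
    · intro hk
      rcases Nat.eq_zero_or_pos k₁ |>.symm with h | h
      · have := hv₁' h; have := hV₂.nonneg; linarith
      · subst h
        have hk₂ : 0 < k₂ := by omega
        have := hv₂' hk₂; have := hV₁.nonneg; linarith
    · linarith
    · intro hL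
      rcases lt_or_eq_of_le hL₁.nonneg with h | h
      · have := hb₁' h; have := hH₂.nonneg; linarith
      · rcases lt_or_eq_of_le hL₂.nonneg with h2 | h2
        · have := hb₂' h2; have := hH₁.nonneg; linarith
        · exfalso; rw [← h, ← h2] at hL; linarith
    · rw [he₁, he₂]; push_cast; ring

lemma M_nonneg : ∀ x ∈ M, 0 ≤ x := by
  rintro x ⟨n, k, S, V, L, H, hS, hV, hL, hH, _, _, _, _, _, _, he⟩
  have := hS.nonneg; have := hV.nonneg; have := hL.nonneg; have := hH.nonneg
  rw [he]
  have hn : (0:ℚ) ≤ (n:ℚ) := by positivity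
  have hk : (0:ℚ) ≤ (k:ℚ) := by positivity
  linarith


lemma mem_M_iff (q : ℚ) : q ∈ M ↔ Mem q := Iff.rfl

lemma read_eq {n k : ℕ} {i0 j0 : ℤ} {S V L H w : ℚ}
    (hS : Tr S) (hV : Dy V) (hL : Dy L) (hH : Tr H) (hw : J w)
    (heq : 8*(n:ℚ)/7 + (k:ℚ)/5 + S + V + L + H = 8*(i0:ℚ)/7 + (j0:ℚ)/5 + w) :
    7 ∣ ((n:ℤ) - i0) ∧ 5 ∣ ((k:ℤ) - j0) := by
  have hJ : J (w - S - V - L - H) :=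
    ((((hw.sub (J.of_Tr hS)).sub (J.of_Dy hV)).sub (J.of_Dy hL)).sub (J.of_Tr hH))
  obtain ⟨a, m, ha⟩ := hJ
  apply read (i := (n:ℤ) - i0) (j := (k:ℤ) - j0) (a := a) (m := m)
  push_cast
  linarith [heq, ha]

lemma memA1 {ν : ℚ} (hν : Dy ν) (h0 : 0 < ν) (h1 : ν ≤ 1) : (ν + 1/5) ∈ M := by
  rw [mem_M_iff]
  refine ⟨0, 1, 0, ν, 0, 0, Tr.zero, hν, Dy.zero, Tr.zero, ?_, ?_, ?_, ?_, ?_, ?_, ?_⟩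
  · norm_num
  · norm_num
  · norm_num; linarith
  · exact fun _ => h0
  · norm_num
  · norm_num
  · norm_num; ring

lemma atomA1 {ν : ℚ} (hν : Dy ν) (h0 : 0 < ν) (h1 : ν ≤ 1) : IsAtomIn M (ν + 1/5) := by
  refine ⟨memA1 hν h0 h1, (by positivity : (0:ℚ) < ν + 1/5).ne', ?_⟩
  intro x hx y hy hxy
  obtain ⟨n₁, k₁, S₁, V₁, L₁, H₁, hS₁, hV₁, hL₁, hH₁, hw₁, hw₁', hv₁, hv₁', hb₁, hb₁', he₁⟩ :=
    (mem_M_iff x).mp hx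
  obtain ⟨n₂, k₂, S₂, V₂, L₂, H₂, hS₂, hV₂, hL₂, hH₂, hw₂, hw₂', hv₂, hv₂', hb₂, hb₂', he₂⟩ :=
    (mem_M_iff y).mp hy
  have heq : 8*((n₁+n₂ : ℕ):ℚ)/7 + ((k₁+k₂ : ℕ):ℚ)/5 + (S₁+S₂) + (V₁+V₂) + (L₁+L₂) + (H₁+H₂)
      = 8*((0:ℤ):ℚ)/7 + ((1:ℤ):ℚ)/5 + ν := by
    push_cast
    rw [he₁, he₂] at hxy
    push_cast at hxy
    linarith
  obtain ⟨h7, h5⟩ := read_eq (hS₁.add hS₂) (hV₁.add hV₂) (hL₁.add hL₂) (hH₁.add hH₂)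
    (J.of_Dy hν) heq
  have hS1n := hS₁.nonneg; have hS2n := hS₂.nonneg; have hV1n := hV₁.nonneg
  have hV2n := hV₂.nonneg; have hL1n := hL₁.nonneg; have hL2n := hL₂.nonneg
  have hH1n := hH₁.nonneg; have hH2n := hH₂.nonneg
  -- translate heq into a plain value equation
  have hval : 8*((n₁:ℚ)+n₂)/7 + ((k₁:ℚ)+k₂)/5 + (S₁+S₂) + (V₁+V₂) + (L₁+L₂) + (H₁+H₂)
      = ν + 1/5 := by
    push_cast at heq; linarith
  -- n total = 0
  have hn : n₁ + n₂ = 0 := by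
    by_contra hc
    have hn1 : 1 ≤ n₁ + n₂ := Nat.one_le_iff_ne_zero.mpr hc
    have hnq : (1:ℚ) ≤ (n₁:ℚ) + n₂ := by exact_mod_cast hn1
    have hSb : 4*((n₁:ℚ)+n₂) ≤ 3*(S₁+S₂) := by push_cast; linarith
    have hkq : (0:ℚ) ≤ (k₁:ℚ)+k₂ := by positivity
    linarith [hval, hnq, hSb, hV1n, hV2n, hL1n, hL2n, hH1n, hH2n, hkq, h1, h0]
  have hn₁ : n₁ = 0 := by omega
  have hn₂ : n₂ = 0 := by omega
  -- S total = 0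
  have hnq₁ : ((n₁:ℚ)) = 0 := by rw [hn₁]; norm_num
  have hnq₂ : ((n₂:ℚ)) = 0 := by rw [hn₂]; norm_num
  have hS₁0 : S₁ = 0 := by
    rw [hnq₁] at hw₁'; linarith
  have hS₂0 : S₂ = 0 := by
    rw [hnq₂] at hw₂'; linarith
  have hS0 : S₁ = 0 ∧ S₂ = 0 := ⟨hS₁0, hS₂0⟩
  -- k total = 1
  have hk6 : k₁ + k₂ ≤ 6 := by
    by_contra hc
    push_neg at hc
    have : (7:ℚ) ≤ (k₁:ℚ) + k₂ := by exact_mod_cast hc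
    linarith [hval, hS1n, hS2n, hV1n, hV2n, hL1n, hL2n, hH1n, hH2n, h1,
      (by positivity : (0:ℚ) ≤ 8*((n₁:ℚ)+n₂)/7)]
  have hk : k₁ + k₂ = 1 ∨ k₁ + k₂ = 6 := by omega
  have hk1 : k₁ + k₂ = 1 := by
    rcases hk with h | h
    · exact h
    · exfalso
      -- k total = 6 forces V total > 0 and total value > 6/5
      have hVpos : 0 < V₁ + V₂ := by
        rcases (by omega : 0 < k₁ ∨ 0 < k₂) with hh | hh
        · have := hv₁' hh; linarith
        · have := hv₂' hh; linarith
      have : ((k₁:ℚ)+k₂) = 6 := by exact_mod_cast h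
      linarith [hval, hS1n, hS2n, hL1n, hL2n, hH1n, hH2n, hVpos, h1,
        (by positivity : (0:ℚ) ≤ 8*((n₁:ℚ)+n₂)/7)]
  -- now the core equation: V + L + H = ν
  have hcore : (V₁+V₂) + (L₁+L₂) + (H₁+H₂) = ν := by
    have hnq : ((n₁:ℚ)+n₂) = 0 := by exact_mod_cast hn
    have hkq : ((k₁:ℚ)+k₂) = 1 := by exact_mod_cast hk1
    rw [hnq, hkq] at hval
    rcases hS0 with ⟨e1, e2⟩
    rw [e1, e2] at hval
    linarith
  -- H total is a natural number
  have hHnat : ∃ z : ℕ, H₁ + H₂ = z := by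
    apply nat_of_dy_tr _ (hH₁.add hH₂)
    have hVL : (V₁+V₂) + (L₁+L₂) ≤ ν := by linarith
    have hrw : H₁ + H₂ = ν - ((V₁ + V₂) + (L₁ + L₂)) := by linarith
    rw [hrw]
    exact hν.sub ((hV₁.add hV₂).add (hL₁.add hL₂)) hVL
  obtain ⟨z, hz⟩ := hHnat
  have hz0 : H₁ + H₂ = 0 := by
    rcases Nat.eq_zero_or_pos z with h | h
    · rw [hz, h]; norm_num
    · exfalso
      have h1z : (1:ℚ) ≤ H₁ + H₂ := by rw [hz]; exact_mod_cast h
      have hLz : (1:ℚ) ≤ L₁ + L₂ := by linarith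
      linarith [hcore, hV1n, hV2n, h1]
  have hH₁0 : H₁ = 0 := by linarith
  have hH₂0 : H₂ = 0 := by linarith
  have hL₁0 : L₁ = 0 := by
    by_contra hc
    have := hb₁' (lt_of_le_of_ne hL1n (Ne.symm hc))
    linarith
  have hL₂0 : L₂ = 0 := by
    by_contra hc
    have := hb₂' (lt_of_le_of_ne hL2n (Ne.symm hc))
    linarith
  rcases (by omega : (k₁ = 1 ∧ k₂ = 0) ∨ (k₁ = 0 ∧ k₂ = 1)) with ⟨e1, e2⟩ | ⟨e1, e2⟩
  · right
    have hV₂0 : V₂ = 0 := by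
      have : V₂ ≤ ((0:ℕ):ℚ) := e2 ▸ hv₂
      simp at this; linarith
    rw [he₂, hn₂, e2, hS0.2, hV₂0, hL₂0, hH₂0]
    norm_num
  · left
    have hV₁0 : V₁ = 0 := by
      have : V₁ ≤ ((0:ℕ):ℚ) := e1 ▸ hv₁
      simp at this; linarith
    rw [he₁, hn₁, e1, hS0.1, hV₁0, hL₁0, hH₁0]
    norm_num

lemma memA0 {h : ℚ} (hh : Tr h) (h4 : 4/3 ≤ h) (h7 : h ≤ 7/3) : (8/7 + h) ∈ M := by
  rw [mem_M_iff]
  refine ⟨1, 0, h, 0, 0, 0, hh, Dy.zero, Dy.zero, Tr.zero, ?_, ?_, ?_, ?_, ?_, ?_, ?_⟩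
  · norm_num; linarith
  · norm_num; linarith
  · norm_num
  · norm_num
  · norm_num
  · norm_num
  · norm_num

lemma atomA0 {h : ℚ} (hh : Tr h) (h4 : 4/3 ≤ h) (h7 : h ≤ 7/3) : IsAtomIn M (8/7 + h) := by
  refine ⟨memA0 hh h4 h7, (by linarith : (0:ℚ) < 8/7 + h).ne', ?_⟩
  intro x hx y hy hxy
  obtain ⟨n₁, k₁, S₁, V₁, L₁, H₁, hS₁, hV₁, hL₁, hH₁, hw₁, hw₁', hv₁, hv₁', hb₁, hb₁', he₁⟩ :=
    (mem_M_iff x).mp hx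
  obtain ⟨n₂, k₂, S₂, V₂, L₂, H₂, hS₂, hV₂, hL₂, hH₂, hw₂, hw₂', hv₂, hv₂', hb₂, hb₂', he₂⟩ :=
    (mem_M_iff y).mp hy
  have hS1n := hS₁.nonneg; have hS2n := hS₂.nonneg; have hV1n := hV₁.nonneg
  have hV2n := hV₂.nonneg; have hL1n := hL₁.nonneg; have hL2n := hL₂.nonneg
  have hH1n := hH₁.nonneg; have hH2n := hH₂.nonneg
  have heq : 8*((n₁+n₂ : ℕ):ℚ)/7 + ((k₁+k₂ : ℕ):ℚ)/5 + (S₁+S₂) + (V₁+V₂) + (L₁+L₂) + (H₁+H₂)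
      = 8*((1:ℤ):ℚ)/7 + ((0:ℤ):ℚ)/5 + h := by
    push_cast
    rw [he₁, he₂] at hxy
    push_cast at hxy
    linarith
  obtain ⟨h7d, h5d⟩ := read_eq (hS₁.add hS₂) (hV₁.add hV₂) (hL₁.add hL₂) (hH₁.add hH₂)
    (J.of_Tr hh) heq
  have hval : 8*((n₁:ℚ)+n₂)/7 + ((k₁:ℚ)+k₂)/5 + (S₁+S₂) + (V₁+V₂) + (L₁+L₂) + (H₁+H₂)
      = 8/7 + h := by
    push_cast at heq; linarith
  -- n total = 1
  have hn : n₁ + n₂ = 1 := by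
    have hub : ¬ (8 ≤ n₁ + n₂) := by
      intro hc
      have : (8:ℚ) ≤ (n₁:ℚ) + n₂ := by exact_mod_cast hc
      have hkq : (0:ℚ) ≤ (k₁:ℚ)+k₂ := by positivity
      linarith [hval, hS1n, hS2n, hV1n, hV2n, hL1n, hL2n, hH1n, hH2n]
    have h7' : (7:ℤ) ∣ ((n₁+n₂ : ℕ):ℤ) - 1 := by exact_mod_cast h7d
    omega
  -- k total = 0
  have hSlb : 4 ≤ 3*(S₁+S₂) := by
    have : ((n₁:ℚ)+n₂) = 1 := by exact_mod_cast hn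
    push_cast at hw₁ hw₂ ⊢
    linarith [hw₁, hw₂, this]
  have hk : k₁ + k₂ = 0 := by
    have hub : ¬ (5 ≤ k₁ + k₂) := by
      intro hc
      have hc' : (5:ℚ) ≤ (k₁:ℚ) + k₂ := by exact_mod_cast hc
      have hVpos : 0 < V₁ + V₂ := by
        rcases (by omega : 0 < k₁ ∨ 0 < k₂) with hh' | hh'
        · have := hv₁' hh'; linarith
        · have := hv₂' hh'; linarith
      have hnq : ((n₁:ℚ)+n₂) = 1 := by exact_mod_cast hn
      linarith [hval, hSlb, hL1n, hL2n, hH1n, hH2n, hVpos, h7, hnq]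
    have h5' : (5:ℤ) ∣ ((k₁+k₂ : ℕ):ℤ) := by simpa using h5d
    omega
  have hk₁ : k₁ = 0 := by omega
  have hk₂ : k₂ = 0 := by omega
  have hV₁0 : V₁ = 0 := by
    have : V₁ ≤ ((0:ℕ):ℚ) := hk₁ ▸ hv₁
    simp at this; linarith
  have hV₂0 : V₂ = 0 := by
    have : V₂ ≤ ((0:ℕ):ℚ) := hk₂ ▸ hv₂
    simp at this; linarith
  -- core : S + L + H = h
  have hcore : (S₁+S₂) + (L₁+L₂) + (H₁+H₂) = h := by
    have hnq : ((n₁:ℚ)+n₂) = 1 := by exact_mod_cast hn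
    have hkq : ((k₁:ℚ)+k₂) = 0 := by exact_mod_cast (by omega : k₁ + k₂ = 0)
    rw [hnq, hkq] at hval
    rw [hV₁0, hV₂0] at hval
    linarith
  -- L total is a natural number
  obtain ⟨z, hz⟩ : ∃ z : ℕ, L₁ + L₂ = z := by
    apply nat_of_dy_tr (hL₁.add hL₂)
    have hrw : L₁ + L₂ = (h - (S₁+S₂)) - (H₁+H₂) := by linarith
    rw [hrw]
    exact (hh.sub (hS₁.add hS₂) (by linarith)).sub (hH₁.add hH₂) (by linarith)
  have hL0 : L₁ + L₂ = 0 := by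
    rcases Nat.eq_zero_or_pos z with hz0 | hz1
    · rw [hz, hz0]; norm_num
    · exfalso
      have h1z : (1:ℚ) ≤ L₁ + L₂ := by rw [hz]; exact_mod_cast hz1
      have hHpos : 0 < H₁ + H₂ := by
        rcases (lt_or_eq_of_le hL1n) with hp | hp
        · have := hb₁' hp; linarith
        · rcases (lt_or_eq_of_le hL2n) with hp2 | hp2
          · have := hb₂' hp2; linarith
          · exfalso; rw [← hp, ← hp2] at h1z; linarith
      linarith [hcore, hSlb, h7]
  have hL₁0 : L₁ = 0 := by linarith
  have hL₂0 : L₂ = 0 := by linarith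
  have hH₁0 : H₁ = 0 := by
    have : H₁ ≤ L₁ := hb₁; linarith
  have hH₂0 : H₂ = 0 := by
    have : H₂ ≤ L₂ := hb₂; linarith
  rcases (by omega : (n₁ = 1 ∧ n₂ = 0) ∨ (n₁ = 0 ∧ n₂ = 1)) with ⟨e1, e2⟩ | ⟨e1, e2⟩
  · right
    have hS₂0 : S₂ = 0 := by
      have : 3*S₂ ≤ 7*((0:ℕ):ℚ) := e2 ▸ hw₂'
      simp at this; linarith
    rw [he₂, e2, hk₂, hS₂0, hV₂0, hL₂0, hH₂0]
    norm_num
  · left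
    have hS₁0 : S₁ = 0 := by
      have : 3*S₁ ≤ 7*((0:ℕ):ℚ) := e1 ▸ hw₁'
      simp at this; linarith
    rw [he₁, e1, hk₁, hS₁0, hV₁0, hL₁0, hH₁0]
    norm_num

lemma memB {L H : ℚ} (hL : Dy L) (hH : Tr H) (hHL : H ≤ L) (hpos : 0 < L → 0 < H) :
    (L + H) ∈ M := by
  rw [mem_M_iff]
  exact ⟨0, 0, 0, 0, L, H, Tr.zero, Dy.zero, hL, hH, by norm_num, by norm_num, by norm_num,
    by norm_num, hHL, hpos, by push_cast; ring⟩

lemma witness : ∀ a : ℚ, IsAtomIn M a → (5/6 - a) ∉ M := by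
  intro a ⟨haM, ha0, hatom⟩ hyM
  set y := 5/6 - a with hy
  have hxy : (5/6 : ℚ) = a + y := by rw [hy]; ring
  obtain ⟨n₁, k₁, S₁, V₁, L₁, H₁, hS₁, hV₁, hL₁, hH₁, hw₁, hw₁', hv₁, hv₁', hb₁, hb₁', he₁⟩ :=
    (mem_M_iff a).mp haM
  obtain ⟨n₂, k₂, S₂, V₂, L₂, H₂, hS₂, hV₂, hL₂, hH₂, hw₂, hw₂', hv₂, hv₂', hb₂, hb₂', he₂⟩ :=
    (mem_M_iff y).mp hyM
  have hS1n := hS₁.nonneg; have hS2n := hS₂.nonneg; have hV1n := hV₁.nonneg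
  have hV2n := hV₂.nonneg; have hL1n := hL₁.nonneg; have hL2n := hL₂.nonneg
  have hH1n := hH₁.nonneg; have hH2n := hH₂.nonneg
  have heq : 8*((n₁+n₂ : ℕ):ℚ)/7 + ((k₁+k₂ : ℕ):ℚ)/5 + (S₁+S₂) + (V₁+V₂) + (L₁+L₂) + (H₁+H₂)
      = 8*((0:ℤ):ℚ)/7 + ((0:ℤ):ℚ)/5 + 5/6 := by
    push_cast
    rw [he₁, he₂] at hxy
    push_cast at hxy
    linarith
  obtain ⟨h7d, h5d⟩ := read_eq (hS₁.add hS₂) (hV₁.add hV₂) (hL₁.add hL₂) (hH₁.add hH₂)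
    (⟨5, 1, by norm_num⟩ : J (5/6)) heq
  have hval : 8*((n₁:ℚ)+n₂)/7 + ((k₁:ℚ)+k₂)/5 + (S₁+S₂) + (V₁+V₂) + (L₁+L₂) + (H₁+H₂)
      = 5/6 := by
    push_cast at heq; linarith
  have hn : n₁ + n₂ = 0 := by
    have hub : ¬ (7 ≤ n₁ + n₂) := by
      intro hc
      have : (7:ℚ) ≤ (n₁:ℚ) + n₂ := by exact_mod_cast hc
      have hkq : (0:ℚ) ≤ (k₁:ℚ)+k₂ := by positivity
      linarith [hval]
    have h7' : (7:ℤ) ∣ ((n₁+n₂ : ℕ):ℤ) := by simpa using h7d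
    omega
  have hk : k₁ + k₂ = 0 := by
    have hub : ¬ (5 ≤ k₁ + k₂) := by
      intro hc
      have : (5:ℚ) ≤ (k₁:ℚ) + k₂ := by exact_mod_cast hc
      have hnq : (0:ℚ) ≤ (n₁:ℚ)+n₂ := by positivity
      linarith [hval]
    have h5' : (5:ℤ) ∣ ((k₁+k₂ : ℕ):ℤ) := by simpa using h5d
    omega
  have hn₁ : n₁ = 0 := by omega
  have hk₁ : k₁ = 0 := by omega
  have hS₁0 : S₁ = 0 := by
    have : 3*S₁ ≤ 7*((0:ℕ):ℚ) := hn₁ ▸ hw₁'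
    simp at this; linarith
  have hV₁0 : V₁ = 0 := by
    have : V₁ ≤ ((0:ℕ):ℚ) := hk₁ ▸ hv₁
    simp at this; linarith
  -- so a = L₁ + H₁
  have ha : a = L₁ + H₁ := by
    rw [he₁, hn₁, hk₁, hS₁0, hV₁0]; norm_num
  have hLpos : 0 < L₁ := by
    rcases lt_or_eq_of_le hL1n with hp | hp
    · exact hp
    · exfalso
      apply ha0
      rw [ha, ← hp]
      have : H₁ ≤ 0 := by rw [← hp] at hb₁; exact hb₁
      linarith
  have hHpos : 0 < H₁ := hb₁' hLpos
  -- a ≤ 5/6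
  have hale : a ≤ 5/6 := by
    have hynn : 0 ≤ y := by
      rw [he₂]
      have h1 : (0:ℚ) ≤ (n₂:ℚ) := by positivity
      have h2 : (0:ℚ) ≤ (k₂:ℚ) := by positivity
      linarith
    linarith [hxy]
  -- H₁ < L₁ strictly
  have hlt : H₁ < L₁ := by
    rcases lt_or_eq_of_le hb₁ with hp | hp
    · exact hp
    · exfalso
      obtain ⟨z, hz⟩ := nat_of_dy_tr (hp ▸ hL₁) hH₁
      rcases Nat.eq_zero_or_pos z with h0 | h0
      · rw [h0] at hz; norm_num at hz; linarith
      · have : (1:ℚ) ≤ H₁ := by rw [hz]; exact_mod_cast h0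
        rw [ha] at hale
        linarith
  -- split a into two elements of M
  obtain ⟨d, hd, hd1, hd2⟩ := dy_dense (by positivity : (0:ℚ) ≤ H₁/3)
    (by linarith : H₁/3 < L₁ - 2*H₁/3)
  have hx' : (d + H₁/3) ∈ M := by
    apply memB hd hH₁.third (le_of_lt hd1)
    intro _
    have : 0 < H₁/3 := by positivity
    linarith
  have hy' : ((L₁ - d) + (H₁ - H₁/3)) ∈ M := by
    apply memB (hL₁.sub hd (by linarith)) (hH₁.sub hH₁.third (by linarith))
    · linarith
    · intro _; linarith
  rcases hatom _ hx' _ hy' (by rw [ha]; ring) with h | h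
  · have h3 : 0 < H₁/3 := by positivity
    have : 0 < d + H₁/3 := by linarith
    linarith
  · have : 0 < (L₁ - d) + (H₁ - H₁/3) := by linarith
    linarith


noncomputable def C : AddSubmonoid ℚ := AddSubmonoid.closure {a | IsAtomIn M a}

lemma tr_shift {H : ℚ} (hH : Tr H) (t : ℤ) (h0 : 0 ≤ H + t/3) : Tr (H + t/3) := by
  obtain ⟨a, m, rfl⟩ := hH
  refine Tr.of_int (3*(a:ℤ) + t*3^m) (m+1) ?_ h0
  have h3 : ((3:ℚ))^m ≠ 0 := by positivity
  rw [pow_succ]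
  push_cast
  field_simp

lemma dy_shift {L : ℚ} (hL : Dy L) (t : ℤ) (h0 : 0 ≤ L + t/2) : Dy (L + t/2) := by
  obtain ⟨a, m, rfl⟩ := hL
  refine Dy.of_int (2*(a:ℤ) + t*2^m) (m+1) ?_ h0
  have h2 : ((2:ℚ))^m ≠ 0 := by positivity
  rw [pow_succ]
  push_cast
  field_simp

lemma tr_73 : Tr (7/3) := ⟨7, 1, by norm_num⟩
lemma tr_43 : Tr (4/3) := ⟨4, 1, by norm_num⟩
lemma tr_7n3 (n : ℕ) : Tr (7*(n:ℚ)/3) := ⟨7*n, 1, by push_cast; ring⟩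

lemma closA0 : ∀ (n : ℕ) (S : ℚ), Tr S → 4*(n:ℚ) ≤ 3*S → 3*S ≤ 7*(n:ℚ) →
    (8*(n:ℚ)/7 + S) ∈ C := by
  intro n
  induction n with
  | zero =>
    intro S hS hl hu
    have : S = 0 := le_antisymm (by push_cast at hu; linarith) hS.nonneg
    rw [this]
    norm_num
  | succ n ih =>
    intro S hS hl hu
    have h43 : (4:ℚ)/3 ≤ S := by push_cast at hl; linarith
    by_cases hc : 3*S ≤ 7*(n:ℚ) + 4
    · -- peel an atom 8/7 + 4/3
      have hrest : (8*(n:ℚ)/7 + (S - 4/3)) ∈ C := by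
        apply ih _ (hS.sub tr_43 h43)
        · push_cast at hl ⊢; linarith
        · push_cast at hc ⊢; linarith
      have hatom : (8/7 + 4/3 : ℚ) ∈ C :=
        AddSubmonoid.subset_closure (atomA0 tr_43 (le_refl _) (by norm_num))
      have := add_mem hatom hrest
      have heq : (8/7 + 4/3 : ℚ) + (8*(n:ℚ)/7 + (S - 4/3)) = 8*((n+1 : ℕ):ℚ)/7 + S := by
        push_cast; ring
      rwa [heq] at this
    · push_neg at hc
      have hpiece : (4:ℚ)/3 ≤ S - 7*(n:ℚ)/3 := by linarith
      have hpiece2 : S - 7*(n:ℚ)/3 ≤ 7/3 := by push_cast at hu; linarith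
      have hrest : (8*(n:ℚ)/7 + 7*(n:ℚ)/3) ∈ C := by
        apply ih _ (tr_7n3 n)
        · push_cast; linarith [Nat.cast_nonneg (α := ℚ) n]
        · linarith
      have hatom : (8/7 + (S - 7*(n:ℚ)/3) : ℚ) ∈ C :=
        AddSubmonoid.subset_closure
          (atomA0 (hS.sub (tr_7n3 n) (by linarith)) hpiece hpiece2)
      have := add_mem hatom hrest
      have heq : (8/7 + (S - 7*(n:ℚ)/3) : ℚ) + (8*(n:ℚ)/7 + 7*(n:ℚ)/3)
          = 8*((n+1 : ℕ):ℚ)/7 + S := by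
        push_cast; ring
      rwa [heq] at this

lemma closA1 : ∀ (k : ℕ) (V : ℚ), Dy V → V ≤ (k:ℚ) → (0 < k → 0 < V) →
    ((k:ℚ)/5 + V) ∈ C := by
  intro k
  induction k with
  | zero =>
    intro V hV hu _
    have : V = 0 := le_antisymm (by exact_mod_cast hu) hV.nonneg
    rw [this]
    norm_num
  | succ k ih =>
    intro V hV hu hpos
    have hVpos : 0 < V := hpos (Nat.succ_pos k)
    rcases Nat.eq_zero_or_pos k with hk0 | hkpos
    · subst hk0
      have hV1 : V ≤ 1 := by push_cast at hu; linarith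
      have hatom : (V + 1/5 : ℚ) ∈ C :=
        AddSubmonoid.subset_closure (atomA1 hV hVpos hV1)
      have heq : (V + 1/5 : ℚ) = ((1:ℕ):ℚ)/5 + V := by push_cast; ring
      rwa [heq] at hatom
    · by_cases hc : V ≤ 1
      · -- split V in half
        have hrest : ((k:ℚ)/5 + V/2) ∈ C := by
          apply ih _ hV.half
          · have : (1:ℚ) ≤ (k:ℚ) := by exact_mod_cast hkpos
            linarith
          · intro _; linarith
        have hatom : (V/2 + 1/5 : ℚ) ∈ C :=
          AddSubmonoid.subset_closure (atomA1 hV.half (by linarith) (by linarith))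
        have := add_mem hatom hrest
        have heq : (V/2 + 1/5 : ℚ) + ((k:ℚ)/5 + V/2) = ((k+1 : ℕ):ℚ)/5 + V := by
          push_cast; ring
        rwa [heq] at this
      · push_neg at hc
        have hrest : ((k:ℚ)/5 + (V - 1)) ∈ C := by
          apply ih _ (hV.sub ⟨1, 0, by norm_num⟩ (by linarith))
          · push_cast at hu ⊢; linarith
          · intro _; linarith
        have hatom : ((1:ℚ) + 1/5) ∈ C :=
          AddSubmonoid.subset_closure (atomA1 ⟨1, 0, by norm_num⟩ one_pos (le_refl 1))
        have := add_mem hatom hrest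
        have heq : ((1:ℚ) + 1/5) + ((k:ℚ)/5 + (V - 1)) = ((k+1 : ℕ):ℚ)/5 + V := by
          push_cast; ring
        rwa [heq] at this

lemma absorb {L H : ℚ} (hL : Dy L) (hH : Tr H) (hHL : H ≤ L) (hpos : 0 < L → 0 < H) :
    (L + H + (8/7 + 4/3 + 1/5 + 1/2)) ∈ C := by
  rcases eq_or_lt_of_le hL.nonneg with hL0 | hLpos
  · -- L = 0, H = 0
    have hH0 : H = 0 := le_antisymm (by linarith) hH.nonneg
    have h1 : (8/7 + 4/3 : ℚ) ∈ C :=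
      AddSubmonoid.subset_closure (atomA0 tr_43 (le_refl _) (by norm_num))
    have h2 : ((1/2 : ℚ) + 1/5) ∈ C :=
      AddSubmonoid.subset_closure (atomA1 ⟨1, 1, by norm_num⟩ (by norm_num) (by norm_num))
    have := add_mem h1 h2
    have heq : (8/7 + 4/3 : ℚ) + ((1/2:ℚ) + 1/5) = L + H + (8/7 + 4/3 + 1/5 + 1/2) := by
      rw [← hL0, hH0]; ring
    rwa [heq] at this
  · have hHpos : 0 < H := hpos hLpos
    set z : ℤ := ⌈H⌉ - 1 with hzdef
    have hz0 : 0 ≤ z := by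
      have : (1:ℤ) ≤ ⌈H⌉ := Int.ceil_pos.mpr hHpos
      omega
    have hceil1 : (⌈H⌉ : ℚ) < H + 1 := Int.ceil_lt_add_one H
    have hceil2 : H ≤ (⌈H⌉ : ℚ) := Int.le_ceil H
    set Sh : ℚ := H - ⌈H⌉ + 7/3 with hShdef
    have hSh4 : 4/3 < Sh := by rw [hShdef]; linarith
    have hSh7 : Sh ≤ 7/3 := by rw [hShdef]; linarith
    have hShTr : Tr Sh := by
      have h2 : Tr (H + ((7 - 3*⌈H⌉ : ℤ):ℚ)/3) := by
        apply tr_shift hH (7 - 3*⌈H⌉)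
        push_cast
        linarith
      have h3 : Sh = H + ((7 - 3*⌈H⌉ : ℤ):ℚ)/3 := by rw [hShdef]; push_cast; ring
      rw [h3]
      exact h2
    set W : ℚ := L + z + 1/2 with hWdef
    have hWpos : (0:ℚ) < W := by
      rw [hWdef]
      have : (0:ℚ) ≤ (z:ℚ) := by exact_mod_cast hz0
      linarith [hL.nonneg]
    set u : ℤ := ⌈(W - 1)/6⌉ with hudef
    set t : ℕ := u.toNat with htdef
    clear_value z Sh W u t
    have hWub : W ≤ 1 + 6*(t:ℚ) := by
      rcases le_or_gt u 0 with hu0 | hu1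
      · have ht0 : t = 0 := by omega
        have hle : (W - 1)/6 ≤ ((0:ℤ):ℚ) := Int.ceil_le.mp (by rw [← hudef]; exact hu0)
        rw [ht0]
        push_cast at hle ⊢
        linarith
      · have htu : (t:ℤ) = u := by rw [htdef]; exact Int.toNat_of_nonneg hu1.le
        have hlc : (W - 1)/6 ≤ (u:ℚ) := by rw [hudef]; exact Int.le_ceil _
        have htq : (t:ℚ) = (u:ℚ) := by exact_mod_cast htu
        rw [htq]
        linarith
    have hSνpos : 0 < W - t := by
      rcases Nat.eq_zero_or_pos t with ht0 | htpos
      · rw [ht0]; push_cast; linarith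
      · have hu1 : 1 ≤ u := by omega
        have htu : (t:ℤ) = u := by rw [htdef]; exact Int.toNat_of_nonneg (by omega)
        have hclt : (u:ℚ) < (W-1)/6 + 1 := by
          have h9 := Int.ceil_lt_add_one ((W-1)/6)
          rw [← hudef] at h9
          exact h9
        have hW1 : 1 ≤ W := by
          have : (0:ℚ) < (W-1)/6 + 1 - 1 ∨ True := Or.inr trivial
          -- u ≥ 1 gives (W-1)/6 > 0
          have h0 : (0:ℚ) < (W-1)/6 := by
            by_contra hcon
            push_neg at hcon
            have h10 : u ≤ 0 := by
              rw [hudef]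
              exact Int.ceil_le.mpr (by exact_mod_cast hcon)
            omega
          linarith
        have htq : (t:ℚ) = (u:ℚ) := by exact_mod_cast htu
        rw [htq]
        linarith
    set Sν : ℚ := W - t with hSνdef
    have hSνDy : Dy Sν := by
      have h2 : Dy (L + ((2*(z - t) + 1 : ℤ):ℚ)/2) := by
        apply dy_shift hL (2*(z - (t:ℤ)) + 1)
        have h3 : L + ((2*(z - (t:ℤ)) + 1 : ℤ):ℚ)/2 = Sν := by
          rw [hSνdef, hWdef]; push_cast; ring
        rw [h3]
        exact le_of_lt hSνpos
      have h3 : Sν = L + ((2*(z - (t:ℤ)) + 1 : ℤ):ℚ)/2 := by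
        rw [hSνdef, hWdef]; push_cast; ring
      rw [h3]
      exact h2
    have hSνub : Sν ≤ ((1 + 5*t : ℕ):ℚ) := by
      rw [hSνdef]; push_cast; linarith
    have h1 : (8/7 + Sh : ℚ) ∈ C :=
      AddSubmonoid.subset_closure (atomA0 hShTr (le_of_lt hSh4) hSh7)
    have h2 : (((1 + 5*t : ℕ):ℚ)/5 + Sν) ∈ C := by
      apply closA1 _ _ hSνDy hSνub
      intro _
      exact hSνpos
    have := add_mem h1 h2
    have heq : (8/7 + Sh : ℚ) + (((1 + 5*t : ℕ):ℚ)/5 + Sν)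
        = L + H + (8/7 + 4/3 + 1/5 + 1/2) := by
      rw [hShdef, hSνdef, hWdef, hzdef]
      push_cast
      ring
    rwa [heq] at this


end Stmt19

/-- There exists a Puiseux monoid that is nearly atomic but not Furstenberg. -/
theorem stmt_19 :
    ∃ M : AddSubmonoid ℚ, (∀ x ∈ M, 0 ≤ x) ∧
      NearlyAtomic M ∧ ¬ Furstenberg M := by
  refine ⟨Stmt19.M, Stmt19.M_nonneg, ?_, ?_⟩
  · -- nearly atomic with shift c₀ = 8/7 + 4/3 + 1/5 + 1/2
    refine ⟨(8/7 + 4/3 + 1/5 + 1/2 : ℚ), ?_, ?_⟩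
    · have h1 : (8/7 + 4/3 : ℚ) ∈ Stmt19.M := Stmt19.memA0 Stmt19.tr_43 (le_refl _) (by norm_num)
      have h2 : ((1/2 : ℚ) + 1/5) ∈ Stmt19.M :=
        Stmt19.memA1 ⟨1, 1, by norm_num⟩ (by norm_num) (by norm_num)
      have := add_mem h1 h2
      have heq : (8/7 + 4/3 : ℚ) + ((1/2:ℚ) + 1/5) = 8/7 + 4/3 + 1/5 + 1/2 := by ring
      rwa [heq] at this
    · intro b hb _
      obtain ⟨n, k, S, V, L, H, hS, hV, hL, hH, hw, hw', hv, hv', hbnd, hbnd', he⟩ :=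
        (Stmt19.mem_M_iff b).mp hb
      show b + (8/7 + 4/3 + 1/5 + 1/2 : ℚ) ∈ AddSubmonoid.closure {a | IsAtomIn Stmt19.M a}
      have h1 : (8*(n:ℚ)/7 + S) ∈ Stmt19.C := Stmt19.closA0 n S hS hw hw'
      have h2 : ((k:ℚ)/5 + V) ∈ Stmt19.C := Stmt19.closA1 k V hV hv hv'
      have h3 : (L + H + (8/7 + 4/3 + 1/5 + 1/2)) ∈ Stmt19.C := Stmt19.absorb hL hH hbnd hbnd'
      have hsum := add_mem (add_mem h1 h2) h3
      have heq : (8*(n:ℚ)/7 + S) + ((k:ℚ)/5 + V) + (L + H + (8/7 + 4/3 + 1/5 + 1/2))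
          = b + (8/7 + 4/3 + 1/5 + 1/2) := by
        rw [he]; ring
      rw [heq] at hsum
      exact hsum
  · intro hF
    have h56 : (5/6 : ℚ) ∈ Stmt19.M := by
      have := Stmt19.memB (L := 1/2) (H := 1/3) ⟨1, 1, by norm_num⟩ ⟨1, 1, by norm_num⟩
        (by norm_num) (fun _ => by norm_num)
      have heq : (1/2 : ℚ) + 1/3 = 5/6 := by norm_num
      rwa [heq] at this
    obtain ⟨a, hatom, hdvd⟩ := hF (5/6) h56 (by norm_num)
    exact Stmt19.witness a hatom hdvd
end
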